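/- Let (X,d) be a metric space, μ a Borel measure on X, and scl a scaling. Then the μ-essential supremum of the lower local scale of μ is at most the Hausdorff scale of X, and the μ-essential supremum of the upper local scale of μ is at most the packing scale of X: ess sup lower-scl_loc μ ≤ scl_H X and ess sup upper-scl_loc μ ≤ scl_P X. -/

import Mathlib

open Filter MeasureTheory Metric Set
open scoped ENNReal Topology NNReal

noncomputable section

/-- A *scaling* is a family `(s α)_{α>0}` of positive non-decreasing functions on `(0,1)`
such that for all `α > β > 0` there is `λ₀ > 1` with, for every `λ ∈ (1, λ₀)`,
`s α ε / s β (ε^λ) → 0` and `s α ε / (s β ε)^λ → 0` as `ε → 0⁺`. -/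
def IsScaling (s : ℝ → ℝ → ℝ) : Prop :=
  (∀ α : ℝ, 0 < α → ∀ ε ∈ Set.Ioo (0:ℝ) 1, 0 < s α ε) ∧
  (∀ α : ℝ, 0 < α → MonotoneOn (s α) (Set.Ioo (0:ℝ) 1)) ∧
  (∀ α β : ℝ, 0 < β → β < α → ∃ l₀ > (1:ℝ), ∀ l ∈ Set.Ioo (1:ℝ) l₀,
    Tendsto (fun ε : ℝ => s α ε / s β (ε ^ l)) (𝓝[>] (0:ℝ)) (𝓝 0) ∧
    Tendsto (fun ε : ℝ => s α ε / (s β ε) ^ l) (𝓝[>] (0:ℝ)) (𝓝 0))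

/-- The covering number `N_ε(E)`: minimal cardinality of a finite cover of `E` by balls of
radius `ε` centered in `E` (`+∞` if there is no such finite cover). -/
def coveringNumber {X : Type*} [MetricSpace X] (E : Set X) (ε : ℝ) : ℝ≥0∞ :=
  ⨅ (t : Finset X) (_ : (↑t : Set X) ⊆ E ∧ E ⊆ ⋃ x ∈ t, ball x ε), (t.card : ℝ≥0∞)

/-- Lower box scale of a set. -/
def lowerBoxScale {X : Type*} [MetricSpace X] (s : ℝ → ℝ → ℝ) (E : Set X) : ℝ≥0∞ :=
  ⨆ (α : ℝ) (_ : 0 < α ∧ Tendsto (fun ε : ℝ => coveringNumber E ε * ENNReal.ofReal (s α ε))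
      (𝓝[>] (0:ℝ)) (𝓝 (⊤ : ℝ≥0∞))), ENNReal.ofReal α

/-- Upper box scale of a set. -/
def upperBoxScale {X : Type*} [MetricSpace X] (s : ℝ → ℝ → ℝ) (E : Set X) : ℝ≥0∞ :=
  ⨅ (α : ℝ) (_ : 0 < α ∧ Tendsto (fun ε : ℝ => coveringNumber E ε * ENNReal.ofReal (s α ε))
      (𝓝[>] (0:ℝ)) (𝓝 (0 : ℝ≥0∞))), ENNReal.ofReal α

/-- `H_ε^φ(E)`: Hausdorff pre-measure at scale `ε`, via countable covers by balls of radii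
at most `ε`. -/
def hausdorffPre {X : Type*} [MetricSpace X] (φ : ℝ → ℝ) (E : Set X) (ε : ℝ) : ℝ≥0∞ :=
  ⨅ (c : ℕ → X) (r : ℕ → ℝ) (t : Set ℕ)
    (_ : (∀ n ∈ t, r n ∈ Set.Ioc (0:ℝ) ε) ∧ E ⊆ ⋃ n ∈ t, ball (c n) (r n)),
    ∑' n : t, ENNReal.ofReal (φ (r n))

/-- `H^φ(E) = lim_{ε→0} H_ε^φ(E)`. -/
def hausdorffMeasureOf {X : Type*} [MetricSpace X] (φ : ℝ → ℝ) (E : Set X) : ℝ≥0∞ :=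
  ⨆ (ε : ℝ) (_ : 0 < ε), hausdorffPre φ E ε

/-- Hausdorff scale of a set. -/
def hausdorffScale {X : Type*} [MetricSpace X] (s : ℝ → ℝ → ℝ) (E : Set X) : ℝ≥0∞ :=
  ⨆ (α : ℝ) (_ : 0 < α ∧ hausdorffMeasureOf (s α) E = ⊤), ENNReal.ofReal α

/-- Packing scale of a set, via countable covers and upper box scales. -/
def packingScale {X : Type*} [MetricSpace X] (s : ℝ → ℝ → ℝ) (A : Set X) : ℝ≥0∞ :=
  ⨅ (E : ℕ → Set X) (_ : (⋃ n, E n) = A), ⨆ n, upperBoxScale s (E n)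

/-- Lower local scale of a measure at a point. -/
def lowerLocalScale {X : Type*} [MetricSpace X] [MeasurableSpace X]
    (s : ℝ → ℝ → ℝ) (μ : Measure X) (x : X) : ℝ≥0∞ :=
  ⨆ (α : ℝ) (_ : 0 < α ∧ Tendsto (fun ε : ℝ => μ (ball x ε) / ENNReal.ofReal (s α ε))
      (𝓝[>] (0:ℝ)) (𝓝 (0 : ℝ≥0∞))), ENNReal.ofReal α

/-- Upper local scale of a measure at a point. -/
def upperLocalScale {X : Type*} [MetricSpace X] [MeasurableSpace X]
    (s : ℝ → ℝ → ℝ) (μ : Measure X) (x : X) : ℝ≥0∞ :=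
  ⨅ (α : ℝ) (_ : 0 < α ∧ Tendsto (fun ε : ℝ => μ (ball x ε) / ENNReal.ofReal (s α ε))
      (𝓝[>] (0:ℝ)) (𝓝 (⊤ : ℝ≥0∞))), ENNReal.ofReal α

/-- Scale of a measure: infimum of the scale over Borel sets of positive measure. -/
def measureScale {X : Type*} [MetricSpace X] [MeasurableSpace X]
    (sc : Set X → ℝ≥0∞) (μ : Measure X) : ℝ≥0∞ :=
  ⨅ (E : Set X) (_ : MeasurableSet E ∧ 0 < μ E), sc E

/-- `*`-scale of a measure: infimum of the scale over Borel sets of full measure. -/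
def measureScaleStar {X : Type*} [MetricSpace X] [MeasurableSpace X]
    (sc : Set X → ℝ≥0∞) (μ : Measure X) : ℝ≥0∞ :=
  ⨅ (E : Set X) (_ : MeasurableSet E ∧ μ Eᶜ = 0), sc E

/-- Quantization number `Q_μ(ε)`. -/
def quantizationNumber {X : Type*} [MetricSpace X] [MeasurableSpace X]
    (μ : Measure X) (ε : ℝ) : ℝ≥0∞ :=
  ⨅ (t : Finset X) (_ : ∫⁻ x, (⨅ c ∈ t, edist x c) ∂μ ≤ ENNReal.ofReal ε), (t.card : ℝ≥0∞)

/-- Lower quantization scale of a measure. -/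
def lowerQuantScale {X : Type*} [MetricSpace X] [MeasurableSpace X]
    (s : ℝ → ℝ → ℝ) (μ : Measure X) : ℝ≥0∞ :=
  ⨆ (α : ℝ) (_ : 0 < α ∧ Tendsto (fun ε : ℝ => quantizationNumber μ ε * ENNReal.ofReal (s α ε))
      (𝓝[>] (0:ℝ)) (𝓝 (⊤ : ℝ≥0∞))), ENNReal.ofReal α

/-- Upper quantization scale of a measure. -/
def upperQuantScale {X : Type*} [MetricSpace X] [MeasurableSpace X]
    (s : ℝ → ℝ → ℝ) (μ : Measure X) : ℝ≥0∞ :=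
  ⨅ (α : ℝ) (_ : 0 < α ∧ Tendsto (fun ε : ℝ => quantizationNumber μ ε * ENNReal.ofReal (s α ε))
      (𝓝[>] (0:ℝ)) (𝓝 (0 : ℝ≥0∞))), ENNReal.ofReal α

/-- Packing number `Ñ_ε(E)`: maximal cardinality of an `ε`-separated subset of `E`. -/
def packingNumber {X : Type*} [MetricSpace X] (E : Set X) (ε : ℝ) : ℝ≥0∞ :=
  ⨆ (t : Finset X) (_ : (↑t : Set X) ⊆ E ∧ ∀ x ∈ t, ∀ y ∈ t, x ≠ y → ε ≤ dist x y),
    (t.card : ℝ≥0∞)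

/-- `P_ε^φ(E)`: supremum of `Σ φ(r_i)` over `ε`-packs of `E` (pairwise disjoint balls of `E`,
centered in `E`, with radii at most `ε`). -/
def packingPre {X : Type*} [MetricSpace X] (φ : ℝ → ℝ) (E : Set X) (ε : ℝ) : ℝ≥0∞ :=
  ⨆ (t : Finset (X × ℝ)) (_ : (∀ p ∈ t, p.1 ∈ E ∧ p.2 ∈ Set.Ioc (0:ℝ) ε) ∧
      (↑t : Set (X × ℝ)).Pairwise fun p q => Disjoint (ball p.1 p.2 ∩ E) (ball q.1 q.2 ∩ E)),
    ∑ p ∈ t, ENNReal.ofReal (φ p.2)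

/-- The packing pre-measure `P_0^φ(E) = lim_{ε→0} P_ε^φ(E)`. -/
def packingPre0 {X : Type*} [MetricSpace X] (φ : ℝ → ℝ) (E : Set X) : ℝ≥0∞ :=
  ⨅ (ε : ℝ) (_ : 0 < ε), packingPre φ E ε

/-- The packing `φ`-measure `P^φ(E)`. -/
def packingMeasureOf {X : Type*} [MetricSpace X] (φ : ℝ → ℝ) (E : Set X) : ℝ≥0∞ :=
  ⨅ (F : ℕ → Set X) (_ : (⋃ n, F n) = E), ∑' n, packingPre0 φ (F n)

/-!
Both inequalities are checked against rational thresholds `q`.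

If the points with `μ (B(x, ε)) = o(s q ε)` had positive measure, then on a subset of positive
measure this would hold uniformly, and the mass distribution principle would make
`H^{s β}(X)` infinite for every `β < q`.

For the packing bound fix a piece `E` of a cover and `α < q` with `N_ε(E) · s α ε → 0`. The points
of `E` with `μ (B(x, r)) ≤ M · s q r` for arbitrarily small `r` are sorted by the dyadic level
`2^{-m-1} < s q r ≤ 2^{-m}` of such a radius. Covering `E` at a quarter of the smallest radius of
that level, the scaling axiom bounds the measure of the `m`-th level by `2M · 2^{-(m+1)(1 - 1/l)}`
for some `l > 1`, and Borel–Cantelli makes the set null. Sorting by levels of `s q`, rather than along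
a fixed sequence of radii, is what makes the series converge for every scaling.
-/

namespace IsScaling

variable {s : ℝ → ℝ → ℝ}

theorem exists_exponent (hs : IsScaling s) {α β : ℝ} (hβ : 0 < β) (hβα : β < α) :
    ∃ l : ℝ, 1 < l ∧ Tendsto (fun ε => s α ε / s β (ε ^ l)) (𝓝[>] 0) (𝓝 0) ∧
      Tendsto (fun ε => s α ε / s β ε ^ l) (𝓝[>] 0) (𝓝 0) := by
  obtain ⟨l₀, hl₀, h⟩ := hs.2.2 α β hβ hβα
  exact ⟨(1 + l₀) / 2, by linarith, h _ ⟨by linarith, by linarith⟩⟩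

theorem exists_eventually_le (hs : IsScaling s) {α β : ℝ} (hβ : 0 < β) (hβα : β < α) :
    ∃ l : ℝ, 1 < l ∧ ∀ᶠ ε in 𝓝[>] 0, s α ε ≤ s β (ε ^ l) ∧ s α ε ≤ s β ε ^ l := by
  obtain ⟨l, hl, h₁, h₂⟩ := hs.exists_exponent hβ hβα
  refine ⟨l, hl, ?_⟩
  filter_upwards [h₁.eventually_lt_const one_pos, h₂.eventually_lt_const one_pos,
    Ioo_mem_nhdsGT one_pos] with ε hε₁ hε₂ hε
  have hεl : ε ^ l ∈ Ioo (0 : ℝ) 1 :=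
    ⟨Real.rpow_pos_of_pos hε.1 l, Real.rpow_lt_one hε.1.le hε.2 (by linarith)⟩
  exact ⟨((div_lt_one (hs.1 β hβ _ hεl)).1 hε₁).le,
    ((div_lt_one (Real.rpow_pos_of_pos (hs.1 β hβ ε hε) l)).1 hε₂).le⟩

theorem tendsto_zero (hs : IsScaling s) {α : ℝ} (hα : 0 < α) :
    Tendsto (s α) (𝓝[>] 0) (𝓝 0) := by
  obtain ⟨l, hl, h, -⟩ := hs.exists_exponent (half_pos hα) (half_lt_self hα)
  have hhalf : (1 / 2 : ℝ) ∈ Ioo 0 1 := by norm_num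
  refine squeeze_zero' ?_ ?_ (by simpa only [zero_mul] using h.mul_const (s (α / 2) (1 / 2)))
  · filter_upwards [Ioo_mem_nhdsGT one_pos] with ε hε using (hs.1 α hα ε hε).le
  · filter_upwards [Ioo_mem_nhdsGT hhalf.1] with ε hε
    have hε1 : ε ∈ Ioo (0 : ℝ) 1 := ⟨hε.1, hε.2.trans hhalf.2⟩
    have hεl : ε ^ l ∈ Ioo (0 : ℝ) 1 :=
      ⟨Real.rpow_pos_of_pos hε.1 l, Real.rpow_lt_one hε.1.le hε1.2 (by linarith)⟩
    have hpos := hs.1 _ (half_pos hα) _ hεl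
    calc s α ε = s α ε / s (α / 2) (ε ^ l) * s (α / 2) (ε ^ l) := (div_mul_cancel₀ _ hpos.ne').symm
      _ ≤ s α ε / s (α / 2) (ε ^ l) * s (α / 2) (1 / 2) := by
        refine mul_le_mul_of_nonneg_left (hs.2.1 _ (half_pos hα) hεl hhalf ?_)
          (div_nonneg (hs.1 α hα ε hε1).le hpos.le)
        exact (Real.rpow_le_rpow_of_exponent_ge hε.1 hε1.2.le hl.le).trans
          ((Real.rpow_one ε).le.trans hε.2.le)

/-- The exponent `l > 1` of the scaling axiom absorbs any constant factor in the radius. -/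
theorem eventually_apply_mul_le (hs : IsScaling s) {α β c : ℝ} (hβ : 0 < β) (hβα : β < α)
    (hc : 0 < c) : ∀ᶠ ε in 𝓝[>] 0, s α (c * ε) ≤ s β ε := by
  obtain ⟨l, hl, h⟩ := hs.exists_eventually_le hβ hβα
  have hmul : Tendsto (c * ·) (𝓝[>] (0 : ℝ)) (𝓝[>] 0) := by
    refine tendsto_nhdsWithin_of_tendsto_nhds_of_eventually_within _ ?_ ?_
    · simpa using ((continuous_const_mul c).tendsto' 0 0 (by simp)).mono_left nhdsWithin_le_nhds
    · filter_upwards [self_mem_nhdsWithin] with ε hε using mul_pos hc hε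
  have hpow : Tendsto (fun ε : ℝ => ε ^ (l - 1)) (𝓝[>] 0) (𝓝 0) := by
    have := (Real.continuousAt_rpow_const 0 (l - 1) (Or.inr (by linarith))).tendsto
    rw [Real.zero_rpow (by linarith)] at this
    exact this.mono_left nhdsWithin_le_nhds
  filter_upwards [hmul.eventually h, hmul.eventually (Ioo_mem_nhdsGT one_pos),
    hpow.eventually_lt_const (inv_pos.2 (Real.rpow_pos_of_pos hc l)), Ioo_mem_nhdsGT one_pos]
    with ε hεl hcε hsmall hε
  have hle : (c * ε) ^ l ≤ ε := by
    calc (c * ε) ^ l = c ^ l * ε ^ (l - 1) * ε := by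
          rw [Real.mul_rpow hc.le hε.1.le, mul_assoc, ← Real.rpow_add_one hε.1.ne', sub_add_cancel]
      _ ≤ 1 * ε := by
          have hcl := Real.rpow_pos_of_pos hc l
          refine mul_le_mul_of_nonneg_right ?_ hε.1.le
          exact (mul_le_mul_of_nonneg_left hsmall.le hcl.le).trans (mul_inv_cancel₀ hcl.ne').le
      _ = ε := one_mul ε
  have hmem : (c * ε) ^ l ∈ Ioo (0 : ℝ) 1 :=
    ⟨Real.rpow_pos_of_pos hcε.1 l, hle.trans_lt hε.2⟩
  exact hεl.1.trans (hs.2.1 β hβ hmem hε hle)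

theorem exists_eventually_apply_mul_le_rpow (hs : IsScaling s) {α q c : ℝ} (hα : 0 < α)
    (hαq : α < q) (hc : 0 < c) : ∃ l : ℝ, 1 < l ∧ ∀ᶠ ε in 𝓝[>] 0, s q (c * ε) ≤ s α ε ^ l := by
  obtain ⟨l, hl, h⟩ := hs.exists_eventually_le hα (left_lt_add_div_two.2 hαq)
  refine ⟨l, hl, ?_⟩
  filter_upwards [hs.eventually_apply_mul_le (by linarith) (add_div_two_lt_right.2 hαq) hc, h]
    with ε h₁ h₂ using h₁.trans h₂.2

end IsScaling

theorem essSup_le_of_forall_rat_lt {X : Type*} [MeasurableSpace X] {μ : Measure X}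
    {f : X → ℝ≥0∞} {c : ℝ≥0∞}
    (h : ∀ q : ℚ, c < ENNReal.ofReal q → ∀ᵐ x ∂μ, f x ≤ ENNReal.ofReal q) : essSup f μ ≤ c := by
  have hall : ∀ᵐ x ∂μ, ∀ q : ℚ, c < ENNReal.ofReal q → f x ≤ ENNReal.ofReal q :=
    ae_all_iff.2 fun q => eventually_imp_distrib_left.2 (h q)
  refine essSup_le_of_ae_le c ?_
  filter_upwards [hall] with x hx
  refine le_of_not_gt fun hcx => ?_
  obtain ⟨q, -, hcq, hqx⟩ := ENNReal.lt_iff_exists_rat_btwn.1 hcx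
  exact (hx q hcq).not_gt hqx

theorem measure_le_of_forall_eventually {X : Type*} [MeasurableSpace X] {μ : Measure X}
    {A : Set X} {P : X → ℝ → Prop} (h : ∀ x ∈ A, ∀ᶠ ε in 𝓝[>] 0, P x ε) {c : ℝ≥0∞}
    (hc : ∀ η > 0, μ {x | x ∈ A ∧ ∀ ε ∈ Ioo 0 η, P x ε} ≤ c) : μ A ≤ c := by
  set A' : ℕ → Set X := fun n => {x | x ∈ A ∧ ∀ ε ∈ Ioo 0 (1 / (n + 1 : ℝ)), P x ε}
  have hmono : Monotone A' := fun m n hmn x hx =>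
    ⟨hx.1, fun ε hε => hx.2 ε ⟨hε.1, hε.2.trans_le (Nat.one_div_le_one_div hmn)⟩⟩
  have hA : A ⊆ ⋃ n, A' n := fun x hx => by
    obtain ⟨u, hu, hsub⟩ := mem_nhdsGT_iff_exists_Ioo_subset.1 (h x hx)
    obtain ⟨n, hn⟩ := exists_nat_one_div_lt (mem_Ioi.1 hu)
    exact mem_iUnion.2 ⟨n, hx, fun ε hε => hsub ⟨hε.1, hε.2.trans hn⟩⟩
  calc μ A ≤ μ (⋃ n, A' n) := measure_mono hA
    _ = ⨆ n, μ (A' n) := hmono.measure_iUnion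
    _ ≤ c := iSup_le fun n => hc _ Nat.one_div_pos_of_nat

theorem exists_pos_forall_le_exists_lt_two_mul {S : Set ℝ} (hS : S.Nonempty) {η : ℝ}
    (hη : 0 < η) (hηS : ∀ r ∈ S, η ≤ r) : ∃ a > 0, (∀ r ∈ S, a ≤ r) ∧ ∃ r ∈ S, r < 2 * a := by
  have ha : η ≤ sInf S := le_csInf hS hηS
  exact ⟨sInf S, hη.trans_le ha, fun r hr => csInf_le ⟨η, hηS⟩ hr,
    exists_lt_of_csInf_lt hS (by linarith)⟩

section

variable {X : Type*} [MetricSpace X] [MeasurableSpace X] {s : ℝ → ℝ → ℝ} {μ : Measure X}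

theorem lowerLocalScale_le_of_not_tendsto (hs : IsScaling s) {x : X} {q : ℝ} (hq : 0 < q)
    (h : ¬ Tendsto (fun ε => μ (ball x ε) / ENNReal.ofReal (s q ε)) (𝓝[>] 0) (𝓝 0)) :
    lowerLocalScale s μ x ≤ ENNReal.ofReal q := by
  refine iSup₂_le fun α ⟨_, hα⟩ => ENNReal.ofReal_le_ofReal (le_of_not_gt fun hqα => h ?_)
  refine tendsto_of_tendsto_of_tendsto_of_le_of_le' tendsto_const_nhds hα
    (Eventually.of_forall fun _ => zero_le) ?_
  filter_upwards [hs.eventually_apply_mul_le hq hqα one_pos] with ε hε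
  rw [one_mul] at hε
  exact ENNReal.div_le_div_left (ENNReal.ofReal_le_ofReal hε) _

theorem measure_le_mul_hausdorffMeasureOf {φ : ℝ → ℝ} {F E : Set X} (hFE : F ⊆ E) {δ : ℝ≥0}
    (hδ : δ ≠ 0) {ε₀ : ℝ} (hε₀ : 0 < ε₀)
    (h : ∀ y r, r ∈ Ioc 0 ε₀ → (ball y r ∩ F).Nonempty → μ (ball y r) ≤ δ * ENNReal.ofReal (φ r)) :
    μ F ≤ δ * hausdorffMeasureOf φ E := by
  have hpre : μ F / δ ≤ hausdorffPre φ E ε₀ := by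
    refine le_iInf fun c => le_iInf fun r => le_iInf fun t => le_iInf fun ⟨hr, hcov⟩ => ?_
    refine ENNReal.div_le_of_le_mul' ?_
    have hterm : ∀ n ∈ t, μ (ball (c n) (r n) ∩ F) ≤ δ * ENNReal.ofReal (φ (r n)) := by
      intro n hn
      rcases (ball (c n) (r n) ∩ F).eq_empty_or_nonempty with hempty | hne
      · simp [hempty]
      · exact (measure_mono inter_subset_left).trans (h _ _ (hr n hn) hne)
    calc μ F ≤ μ (⋃ n ∈ t, ball (c n) (r n) ∩ F) := measure_mono fun x hx => by
          obtain ⟨n, hn, hxn⟩ := mem_iUnion₂.1 (hcov (hFE hx))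
          exact mem_iUnion₂.2 ⟨n, hn, hxn, hx⟩
      _ ≤ ∑' n : t, μ (ball (c n) (r n) ∩ F) := measure_biUnion_le μ t.to_countable _
      _ ≤ ∑' n : t, δ * ENNReal.ofReal (φ (r n)) := ENNReal.tsum_le_tsum fun n => hterm n n.2
      _ = δ * ∑' n : t, ENNReal.ofReal (φ (r n)) := ENNReal.tsum_mul_left
  rw [ENNReal.div_le_iff (by simpa using hδ) ENNReal.coe_ne_top, mul_comm] at hpre
  exact hpre.trans (by gcongr; exact le_iSup₂_of_le ε₀ hε₀ le_rfl)

theorem hausdorffMeasureOf_eq_top (hs : IsScaling s) {A : Set X} (hA : μ A ≠ 0) {β q : ℝ}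
    (hβ : 0 < β) (hβq : β < q)
    (hloc : ∀ x ∈ A, Tendsto (fun ε => μ (ball x ε) / ENNReal.ofReal (s q ε)) (𝓝[>] 0) (𝓝 0)) :
    hausdorffMeasureOf (s β) (univ : Set X) = ⊤ := by
  have hq := hβ.trans hβq
  obtain ⟨ε₁, hε₁, hdouble⟩ :=
    mem_nhdsGT_iff_exists_Ioo_subset.1 (hs.eventually_apply_mul_le hβ hβq two_pos)
  have key : ∀ δ : ℝ≥0, δ ≠ 0 → μ A ≤ δ * hausdorffMeasureOf (s β) (univ : Set X) := by
    intro δ hδ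
    refine measure_le_of_forall_eventually
      (P := fun x ε => μ (ball x ε) ≤ δ * ENNReal.ofReal (s q ε)) (fun x hx => ?_) fun η hη => ?_
    · filter_upwards [(hloc x hx).eventually_lt_const (ENNReal.coe_pos.2 hδ.bot_lt),
        Ioo_mem_nhdsGT one_pos] with ε hlt hε
      rw [← ENNReal.div_le_iff (by simpa using hs.1 q hq ε hε) ENNReal.ofReal_ne_top]
      exact hlt.le
    refine measure_le_mul_hausdorffMeasureOf (subset_univ _) hδ (ε₀ := min (η / 4) (ε₁ / 2))
      (lt_min (by linarith) (half_pos hε₁)) ?_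
    rintro y r ⟨hr, hrε⟩ ⟨x, hxy, -, hx⟩
    have hr₁ : r < ε₁ := by linarith [hrε.trans (min_le_right _ _)]
    calc μ (ball y r) ≤ μ (ball x (2 * r)) :=
          measure_mono (ball_subset_ball' (by linarith [(mem_ball'.1 hxy).le]))
      _ ≤ δ * ENNReal.ofReal (s q (2 * r)) :=
          hx _ ⟨by linarith, by linarith [hrε.trans (min_le_left _ _)]⟩
      _ ≤ δ * ENNReal.ofReal (s β r) := by gcongr; exact hdouble ⟨hr, hr₁⟩
  by_contra htop
  have hlim : Tendsto (fun δ : ℝ≥0 => (δ : ℝ≥0∞) * hausdorffMeasureOf (s β) (univ : Set X))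
      (𝓝[>] 0) (𝓝 0) := by
    simpa using (ENNReal.Tendsto.mul_const (ENNReal.tendsto_coe.2 tendsto_id)
      (Or.inr htop)).mono_left (nhdsWithin_le_nhds (a := (0 : ℝ≥0)))
  exact hA (nonpos_iff_eq_zero.1 (ge_of_tendsto hlim
    (eventually_nhdsWithin_of_forall fun δ hδ => key δ (ne_of_gt hδ))))

theorem ae_lowerLocalScale_le (hs : IsScaling s) {q : ℝ}
    (hq : hausdorffScale s (univ : Set X) < ENNReal.ofReal q) :
    ∀ᵐ x ∂μ, lowerLocalScale s μ x ≤ ENNReal.ofReal q := by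
  obtain ⟨β, -, hHβ, hβq⟩ := ENNReal.lt_iff_exists_real_btwn.1 hq
  have hβ : 0 < β := ENNReal.ofReal_pos.1 (pos_of_gt hHβ)
  have hβq : β < q := (ENNReal.ofReal_lt_ofReal_iff_of_nonneg hβ.le).1 hβq
  have hnull :
      μ {x | Tendsto (fun ε => μ (ball x ε) / ENNReal.ofReal (s q ε)) (𝓝[>] 0) (𝓝 0)} = 0 := by
    by_contra hA
    exact hHβ.not_ge (le_iSup₂_of_le β ⟨hβ, hausdorffMeasureOf_eq_top hs hA hβ hβq fun x hx => hx⟩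
      le_rfl)
  filter_upwards [measure_eq_zero_iff_ae_notMem.1 hnull] with x hx
  exact lowerLocalScale_le_of_not_tendsto hs (hβ.trans hβq) hx

theorem measure_le_coveringNumber_mul {E T : Set X} (hTE : T ⊆ E) {ρ : ℝ} {c : ℝ≥0∞}
    (hc : c ≠ ⊤) (hN : coveringNumber E ρ ≠ ⊤) (h : ∀ y ∈ T, μ (ball y (2 * ρ)) ≤ c) :
    μ T ≤ coveringNumber E ρ * c := by
  rw [_root_.coveringNumber, iInf_subtype']
  have : Nonempty {t : Finset X // ↑t ⊆ E ∧ E ⊆ ⋃ x ∈ t, ball x ρ} := by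
    by_contra hempty
    rw [not_nonempty_iff] at hempty
    exact hN (by rw [_root_.coveringNumber, iInf_subtype']; exact iInf_of_empty _)
  rw [ENNReal.iInf_mul (fun htop => absurd htop hc)]
  refine le_iInf ?_
  rintro ⟨t, -, hcov⟩
  have hterm : ∀ z ∈ t, μ (ball z ρ ∩ T) ≤ c := by
    intro z _
    rcases (ball z ρ ∩ T).eq_empty_or_nonempty with hempty | ⟨y, hyz, hy⟩
    · simp [hempty]
    · refine (measure_mono (inter_subset_left.trans (ball_subset_ball' ?_))).trans (h y hy)
      linarith [(mem_ball'.1 hyz).le]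
  calc μ T ≤ μ (⋃ z ∈ t, ball z ρ ∩ T) := measure_mono fun y hy => by
        obtain ⟨z, hz, hyz⟩ := mem_iUnion₂.1 (hcov (hTE hy))
        exact mem_iUnion₂.2 ⟨z, hz, hyz, hy⟩
    _ ≤ ∑ z ∈ t, μ (ball z ρ ∩ T) := measure_biUnion_finset_le t _
    _ ≤ ∑ _z ∈ t, c := Finset.sum_le_sum hterm
    _ = t.card * c := by rw [Finset.sum_const, nsmul_eq_mul]

theorem measure_setOf_exists_ball_le_le (hs : IsScaling s) {E : Set X} {α q l η₀ τ c : ℝ}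
    (hα : 0 < α) (hq : 0 < q) (hl : 0 < l) (hτ : 0 < τ) (hη₀ : η₀ ≤ 1)
    (hcomp : ∀ ε ∈ Ioo 0 η₀, s q (8 * ε) ≤ s α ε ^ l)
    (hbox : ∀ ε ∈ Ioo 0 η₀, coveringNumber E ε * ENNReal.ofReal (s α ε) < 1) :
    μ {x | x ∈ E ∧ ∃ r ∈ Ioo 0 η₀, τ < s q r ∧ μ (ball x r) ≤ ENNReal.ofReal c} ≤
      ENNReal.ofReal (τ ^ (-l⁻¹) * c) := by
  set T := {x | x ∈ E ∧ ∃ r ∈ Ioo 0 η₀, τ < s q r ∧ μ (ball x r) ≤ ENNReal.ofReal c}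
  rcases T.eq_empty_or_nonempty with hT | ⟨-, -, r₀, hr₀, hτr₀, -⟩
  · simp [hT]
  obtain ⟨η, hη, hsmall⟩ :=
    mem_nhdsGT_iff_exists_Ioo_subset.1 ((hs.tendsto_zero hq).eventually_lt_const hτ)
  obtain ⟨a, ha, haS, ε, ⟨hε, hτε⟩, hεa⟩ :=
    exists_pos_forall_le_exists_lt_two_mul (S := {r | r ∈ Ioo 0 η₀ ∧ τ < s q r})
      ⟨r₀, hr₀, hτr₀⟩ hη fun r hr => le_of_not_gt fun hrη =>
        (hsmall ⟨hr.1.1, hrη⟩ : s q r < τ).not_gt hr.2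
  have haε := haS ε ⟨hε, hτε⟩
  have hρ : a / 4 ∈ Ioo 0 η₀ := ⟨by positivity, by linarith [hε.2]⟩
  have hρ1 : a / 4 ∈ Ioo (0 : ℝ) 1 := ⟨hρ.1, hρ.2.trans_le hη₀⟩
  have hε8 : ε / 8 ∈ Ioo 0 η₀ := ⟨by linarith [hε.1], by linarith [hε.2, hε.1]⟩
  have hsρ := hs.1 α hα _ hρ1
  have hτρ : τ < s α (a / 4) ^ l := calc
    τ < s q (8 * (ε / 8)) := by rwa [mul_div_cancel₀ ε (by norm_num : (8 : ℝ) ≠ 0)]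
    _ ≤ s α (ε / 8) ^ l := hcomp _ hε8
    _ ≤ s α (a / 4) ^ l := by
      have hε81 : ε / 8 ∈ Ioo (0 : ℝ) 1 := ⟨hε8.1, hε8.2.trans_le hη₀⟩
      exact Real.rpow_le_rpow (hs.1 α hα _ hε81).le
        (hs.2.1 α hα hε81 hρ1 (by linarith)) hl.le
  have hN : coveringNumber E (a / 4) ≤ ENNReal.ofReal (τ ^ (-l⁻¹)) := by
    have hτl : τ ^ l⁻¹ < s α (a / 4) := calc
      τ ^ l⁻¹ < (s α (a / 4) ^ l) ^ l⁻¹ := Real.rpow_lt_rpow hτ.le hτρ (inv_pos.2 hl)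
      _ = s α (a / 4) := Real.rpow_rpow_inv hsρ.le hl.ne'
    calc coveringNumber E (a / 4) ≤ (ENNReal.ofReal (s α (a / 4)))⁻¹ :=
          ENNReal.le_inv_iff_mul_le.2 (hbox _ hρ).le
      _ = ENNReal.ofReal (s α (a / 4))⁻¹ := (ENNReal.ofReal_inv_of_pos hsρ).symm
      _ ≤ ENNReal.ofReal (τ ^ (-l⁻¹)) := by
          rw [Real.rpow_neg hτ.le]
          exact ENNReal.ofReal_le_ofReal (inv_anti₀ (by positivity) hτl.le)
  calc μ T ≤ coveringNumber E (a / 4) * ENNReal.ofReal c := by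
        refine measure_le_coveringNumber_mul (fun x hx => hx.1) ENNReal.ofReal_ne_top
          (ne_top_of_le_ne_top ENNReal.ofReal_ne_top hN) ?_
        rintro y ⟨-, r, hr, hτr, hy⟩
        exact (measure_mono (ball_subset_ball (by linarith [haS r ⟨hr, hτr⟩]))).trans hy
    _ ≤ ENNReal.ofReal (τ ^ (-l⁻¹)) * ENNReal.ofReal c := by gcongr
    _ = ENNReal.ofReal (τ ^ (-l⁻¹) * c) := (ENNReal.ofReal_mul (by positivity)).symm

theorem measure_setOf_frequently_ball_le_eq_zero (hs : IsScaling s) {E : Set X} {α q : ℝ}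
    (hα : 0 < α) (hαq : α < q)
    (hbox : Tendsto (fun ε => coveringNumber E ε * ENNReal.ofReal (s α ε)) (𝓝[>] 0) (𝓝 0))
    (M : ℕ) : μ {x | x ∈ E ∧ ∃ᶠ r in 𝓝[>] 0, μ (ball x r) ≤ M * ENNReal.ofReal (s q r)} = 0 := by
  have hq := hα.trans hαq
  obtain ⟨l, hl, hcomp⟩ := hs.exists_eventually_apply_mul_le_rpow hα hαq (by norm_num : (0 : ℝ) < 8)
  obtain ⟨u, hu, hsub⟩ :=
    mem_nhdsGT_iff_exists_Ioo_subset.1 (hcomp.and (hbox.eventually_lt_const one_pos))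
  set η₀ := min u 1
  have hη₀ : 0 < η₀ := lt_min hu one_pos
  have hsub' : ∀ ε ∈ Ioo 0 η₀, _ := fun ε hε => hsub ⟨hε.1, hε.2.trans_le (min_le_left _ _)⟩
  set θ : ℝ := (1 / 2) ^ (1 - l⁻¹)
  have hθ : θ < 1 := Real.rpow_lt_one (by norm_num) (by norm_num)
    (sub_pos.2 (inv_lt_one_of_one_lt₀ hl))
  set T : ℕ → Set X := fun m => {x | x ∈ E ∧ ∃ r ∈ Ioo 0 η₀, (1 / 2) ^ (m + 1) < s q r ∧
    μ (ball x r) ≤ ENNReal.ofReal (2 * M * (1 / 2) ^ (m + 1))}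
  have hT : ∀ m, μ (T m) ≤ ENNReal.ofReal (2 * M * θ * θ ^ m) := fun m => by
    refine (measure_setOf_exists_ball_le_le hs hα hq (by linarith) (by positivity)
      (min_le_right _ _) (fun ε hε => (hsub' ε hε).1) fun ε hε => (hsub' ε hε).2).trans_eq ?_
    congr 1
    rw [mul_left_comm, ← Real.rpow_add_one (by positivity), ← Real.rpow_pow_comm (by norm_num)]
    simp only [θ]
    ring_nf
  have hsum : ∑' m, μ (T m) ≠ ⊤ := by
    refine ne_top_of_le_ne_top ?_ (ENNReal.tsum_le_tsum hT)
    rw [← ENNReal.ofReal_tsum_of_nonneg (fun m => by positivity)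
      ((summable_geometric_of_lt_one (by positivity) hθ).mul_left _)]
    exact ENNReal.ofReal_ne_top
  refine measure_mono_null (fun x ⟨hxE, hfreq⟩ => ?_) (measure_limsup_atTop_eq_zero hsum)
  rw [mem_limsup_iff_frequently_mem, frequently_atTop]
  intro m₀
  obtain ⟨r, hμr, hr, hsr⟩ := (hfreq.and_eventually
    ((eventually_mem_set.2 (Ioo_mem_nhdsGT hη₀)).and ((hs.tendsto_zero hq).eventually_lt_const
      (by positivity : (0 : ℝ) < (1 / 2) ^ m₀)))).exists
  obtain ⟨m, hm, hsm⟩ := exists_nat_pow_near_of_lt_one (hs.1 q hq r ⟨hr.1, hr.2.trans_le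
    (min_le_right _ _)⟩) (hsr.le.trans (pow_le_one₀ (by norm_num) (by norm_num)))
    (by norm_num : (0 : ℝ) < 1 / 2) (by norm_num)
  refine ⟨m, ?_, hxE, r, hr, hm, hμr.trans ?_⟩
  · exact Nat.lt_succ_iff.1 ((pow_lt_pow_iff_right_of_lt_one₀ (by norm_num) (by norm_num)).1
      (hm.trans hsr))
  · rw [← ENNReal.ofReal_natCast, ← ENNReal.ofReal_mul (by positivity)]
    refine ENNReal.ofReal_le_ofReal ?_
    calc (M : ℝ) * s q r ≤ M * (1 / 2) ^ m := by gcongr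
      _ = 2 * M * (1 / 2) ^ (m + 1) := by ring

theorem ae_upperLocalScale_le (hs : IsScaling s) {E : Set X} {q : ℝ}
    (hE : upperBoxScale s E < ENNReal.ofReal q) :
    ∀ᵐ x ∂μ, x ∈ E → upperLocalScale s μ x ≤ ENNReal.ofReal q := by
  obtain ⟨α, ⟨hα, hbox⟩, hαq⟩ := by simpa only [upperBoxScale, iInf_lt_iff] using hE
  have hq : 0 < q := ENNReal.ofReal_pos.1 (pos_of_gt hαq)
  have hαq : α < q := (ENNReal.ofReal_lt_ofReal_iff hq).1 hαq
  have hlarge : ∀ M : ℕ, ∀ᵐ x ∂μ, x ∈ E →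
      ∀ᶠ r in 𝓝[>] 0, (M : ℝ≥0∞) * ENNReal.ofReal (s q r) < μ (ball x r) := fun M => by
    filter_upwards [measure_eq_zero_iff_ae_notMem.1
      (measure_setOf_frequently_ball_le_eq_zero hs hα hαq hbox M)] with x hx hxE
    simpa [hxE, not_frequently] using hx
  filter_upwards [ae_all_iff.2 hlarge] with x hx hxE
  refine iInf₂_le q ⟨hq, ENNReal.tendsto_nhds_top_iff_nat.2 fun M => ?_⟩
  filter_upwards [hx M hxE, Ioo_mem_nhdsGT one_pos] with r hr hr1
  exact (ENNReal.lt_div_iff_mul_lt (Or.inl (by simpa using hs.1 q hq r hr1))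
    (Or.inl ENNReal.ofReal_ne_top)).2 hr

end

theorem essSup_localScale_le_hausdorff_packing_general
    {X : Type*} [MetricSpace X] [MeasurableSpace X]
    (μ : Measure X) (s : ℝ → ℝ → ℝ) (hs : IsScaling s) :
    essSup (lowerLocalScale s μ) μ ≤ hausdorffScale s (Set.univ : Set X) ∧
    essSup (upperLocalScale s μ) μ ≤ packingScale s (Set.univ : Set X) := by
  refine ⟨essSup_le_of_forall_rat_lt fun q hq => ae_lowerLocalScale_le hs hq, ?_⟩
  refine le_iInf₂ fun F hF => essSup_le_of_forall_rat_lt fun q hq => ?_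
  have hF_lt : ∀ n, upperBoxScale s (F n) < ENNReal.ofReal q :=
    fun n => (le_iSup (fun n => upperBoxScale s (F n)) n).trans_lt hq
  filter_upwards [ae_all_iff.2 fun n => ae_upperLocalScale_le hs (hF_lt n)] with x hx
  obtain ⟨n, hn⟩ := mem_iUnion.1 (hF ▸ mem_univ x)
  exact hx n hn

/-- The essential suprema of the local scales of a Borel measure are bounded by the
Hausdorff and packing scales of the ambient metric space. -/
theorem essSup_localScale_le_hausdorff_packing
    {X : Type*} [MetricSpace X] [MeasurableSpace X] [BorelSpace X]
    (μ : Measure X) (s : ℝ → ℝ → ℝ) (hs : IsScaling s) :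
    essSup (lowerLocalScale s μ) μ ≤ hausdorffScale s (Set.univ : Set X) ∧
    essSup (upperLocalScale s μ) μ ≤ packingScale s (Set.univ : Set X) :=
  essSup_localScale_le_hausdorff_packing_general μ s hs

end
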